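/- arXiv:1509.03294 — 2 statements merged into one kernel-verified Lean document; each statement's English description precedes it below -/
import Mathlib

section
/- Let p, q : ℕ. On ℂ^p × ℂ^q define the hermitian form h((x,y),(x',y')) = ∑_i conj(x i) * x' i − ∑_j conj(y j) * y' j. Let A ∈ Matrix (Fin p) (Fin p) ℂ, B ∈ Matrix (Fin p) (Fin q) ℂ, C ∈ Matrix (Fin q) (Fin p) ℂ, D ∈ Matrix (Fin q) (Fin q) ℂ, and suppose fromBlocks A B C D is invertible. Then the image of the subspace ℂ^p × {0} under the map (x,y) ↦ (A *ᵥ x + B *ᵥ y, C *ᵥ x + D *ᵥ y), namely {(A *ᵥ u, C *ᵥ u) | u ∈ (Fin p → ℂ)}, satisfies h(v,v) > 0 for all nonzero v in it if and only if A is invertible and 1 − (C * A⁻¹)ᴴ * (C * A⁻¹) is positive definite. -/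
/-!
On the graph `{(A u, C u)}` the form is `‖A u‖² − ‖C u‖²`. If it is positive there, `A` is
injective: a nonzero kernel vector `u` either has `C u ≠ 0`, giving a vector of negative norm, or
lies in the kernel of `g = [[A, B], [C, D]]`. Substituting `x = A u`, positivity becomes
`‖Z x‖ < ‖x‖` for all `x ≠ 0` with `Z = C A⁻¹`, which is `1 − Zᴴ Z ≫ 0`.
-/

open Matrix
open scoped ComplexOrder

namespace Matrix

variable {m n R : Type*} [Fintype m] [Fintype n] [DecidableEq n]

lemma dotProduct_one_sub_conjTranspose_mul_mulVec [CommRing R] [StarRing R]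
    (Z : Matrix m n R) (x : n → R) :
    star x ⬝ᵥ ((1 - Zᴴ * Z) *ᵥ x) = star x ⬝ᵥ x - star (Z *ᵥ x) ⬝ᵥ (Z *ᵥ x) := by
  rw [sub_mulVec, one_mulVec, dotProduct_sub, ← mulVec_mulVec, dotProduct_mulVec, ← star_mulVec]

lemma posDef_one_sub_conjTranspose_mul_self_iff [CommRing R] [PartialOrder R]
    [IsOrderedAddMonoid R] [StarRing R] {Z : Matrix m n R} :
    (1 - Zᴴ * Z).PosDef ↔ ∀ x ≠ 0, star (Z *ᵥ x) ⬝ᵥ (Z *ᵥ x) < star x ⬝ᵥ x := by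
  simp only [posDef_iff_dotProduct_mulVec, dotProduct_one_sub_conjTranspose_mul_mulVec, sub_pos,
    and_iff_right (isHermitian_one.sub (isHermitian_conjTranspose_mul_self Z))]

lemma posDef_one_sub_conjTranspose_mul_mul_inv_iff [CommRing R] [PartialOrder R]
    [IsOrderedAddMonoid R] [StarRing R] {A : Matrix n n R} {C : Matrix m n R} (hA : IsUnit A) :
    (1 - (C * A⁻¹)ᴴ * (C * A⁻¹)).PosDef ↔
      ∀ u ≠ 0, star (C *ᵥ u) ⬝ᵥ (C *ᵥ u) < star (A *ᵥ u) ⬝ᵥ (A *ᵥ u) := by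
  have hdet := (isUnit_iff_isUnit_det A).1 hA
  rw [posDef_one_sub_conjTranspose_mul_self_iff, (mulVec_surjective_iff_isUnit.2 hA).forall]
  simp only [mulVec_mulVec, nonsing_inv_mul_cancel_right _ _ hdet,
    (mulVec_injective_of_isUnit hA).ne_iff' (mulVec_zero A)]

lemma eq_zero_of_isUnit_fromBlocks_of_mulVec_eq_zero [DecidableEq m] [CommRing R]
    {A : Matrix n n R} {B : Matrix n m R} {C : Matrix m n R} {D : Matrix m m R}
    (hg : IsUnit (fromBlocks A B C D)) {u : n → R} (hA : A *ᵥ u = 0) (hC : C *ᵥ u = 0) :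
    u = 0 := by
  have : fromBlocks A B C D *ᵥ Sum.elim u 0 = fromBlocks A B C D *ᵥ 0 := by
    simp [fromBlocks_mulVec, hA, hC]
  exact funext fun i ↦ congrFun (mulVec_injective_of_isUnit hg this) (.inl i)

lemma isUnit_of_isUnit_fromBlocks_of_forall_dotProduct_lt [DecidableEq m] [Field R]
    [PartialOrder R] [StarRing R] [StarOrderedRing R]
    {A : Matrix n n R} {B : Matrix n m R} {C : Matrix m n R} {D : Matrix m m R}
    (hg : IsUnit (fromBlocks A B C D))
    (hpos : ∀ u, (A *ᵥ u, C *ᵥ u) ≠ 0 → star (C *ᵥ u) ⬝ᵥ (C *ᵥ u) < star (A *ᵥ u) ⬝ᵥ (A *ᵥ u)) :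
    IsUnit A := by
  refine mulVec_injective_iff_isUnit.1 ?_
  rw [← coe_mulVecLin, ← LinearMap.ker_eq_bot, ker_mulVecLin_eq_bot_iff]
  intro u hAu
  refine eq_zero_of_isUnit_fromBlocks_of_mulVec_eq_zero hg hAu ?_
  by_contra hCu
  have hneg := hpos u (by simp [hCu])
  rw [hAu, star_zero, zero_dotProduct] at hneg
  exact (dotProduct_star_self_nonneg _).not_gt hneg

end Matrix

/-- For `g = [[A,B],[C,D]]` invertible, the translate `{(A *ᵥ u, C *ᵥ u)}` of the positive
subspace `ℂ^p × 0` is `h`-positive definite iff `A` is invertible and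
`1 − (CA⁻¹)ᴴ (CA⁻¹)` is positive definite (parametrization of the cycle space of
flag domains of `SU(p,q)` by the bounded symmetric domain). -/
theorem stmt_12 (p q : ℕ)
    (h : ((Fin p → ℂ) × (Fin q → ℂ)) → ((Fin p → ℂ) × (Fin q → ℂ)) → ℂ)
    (hh : ∀ v v', h v v' =
      (∑ i, starRingEnd ℂ (v.1 i) * v'.1 i) - ∑ j, starRingEnd ℂ (v.2 j) * v'.2 j)
    (A : Matrix (Fin p) (Fin p) ℂ) (B : Matrix (Fin p) (Fin q) ℂ)
    (C : Matrix (Fin q) (Fin p) ℂ) (D : Matrix (Fin q) (Fin q) ℂ)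
    (hg : IsUnit (Matrix.fromBlocks A B C D)) :
    (∀ v ∈ {v : (Fin p → ℂ) × (Fin q → ℂ) | ∃ u, v = (A *ᵥ u, C *ᵥ u)},
        v ≠ 0 → h v v > 0) ↔
    (IsUnit A ∧ (1 - (C * A⁻¹).conjTranspose * (C * A⁻¹)).PosDef) := by
  have hform (u : Fin p → ℂ) : h (A *ᵥ u, C *ᵥ u) (A *ᵥ u, C *ᵥ u) > 0 ↔
      star (C *ᵥ u) ⬝ᵥ (C *ᵥ u) < star (A *ᵥ u) ⬝ᵥ (A *ᵥ u) := by
    simp [hh, dotProduct]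
  simp only [Set.mem_ofPred_eq, forall_exists_index, forall_eq_apply_imp_iff, hform]
  refine ⟨fun H ↦ ?_, fun ⟨hA, hpd⟩ u hu ↦ ?_⟩
  · have hA := isUnit_of_isUnit_fromBlocks_of_forall_dotProduct_lt hg H
    refine ⟨hA, (posDef_one_sub_conjTranspose_mul_mul_inv_iff hA).2 fun u hu ↦ H u ?_⟩
    have hAu : A *ᵥ u ≠ 0 := by simpa using (mulVec_injective_of_isUnit hA).ne hu
    simp [hAu]
  · exact (posDef_one_sub_conjTranspose_mul_mul_inv_iff hA).1 hpd u (by rintro rfl; simp at hu)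
end

section
/- Let p, q : ℕ. On ℂ^p × ℂ^q define the hermitian form h((x,y),(x',y')) = ∑_i conj(x i) * x' i − ∑_j conj(y j) * y' j. Let Z₁ ∈ Matrix (Fin q) (Fin p) ℂ with 1 − Z₁ᴴ * Z₁ positive definite, and let W = {(u, Z₁ *ᵥ u) | u ∈ (Fin p → ℂ)}. Then: (a) h(v,v) > 0 for every nonzero v ∈ W; (b) the h-orthogonal complement {v' | ∀ v ∈ W, h(v, v') = 0} equals {(Z₁ᴴ *ᵥ w, w) | w ∈ (Fin q → ℂ)}; (c) 1 − Z₁ * Z₁ᴴ is positive definite, so h(v,v) < 0 for every nonzero v in this orthogonal complement. -/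
/-!
Writing `h` in terms of dot products, `h((u, Z₁u), (u, Z₁u)) = uᴴ(1 − Z₁ᴴZ₁)u`, so the graph
of `Z₁` is `h`-positive, and `h((u, Z₁u), v') = uᴴ(v'₁ − Z₁ᴴv'₂)`, so its `h`-orthocomplement is
the graph of `Z₁ᴴ` over the second factor, on which `h` is `−wᴴ(1 − Z₁Z₁ᴴ)w`. That
`1 − Z₁Z₁ᴴ` is positive definite says that `Z₁ᴴ` is a strict contraction, like `Z₁`: for
`x = Z₁ᴴy ≠ 0`, Cauchy–Schwarz gives `‖x‖² = ⟪Z₁x, y⟫ ≤ ‖Z₁x‖‖y‖ < ‖x‖‖y‖`.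
-/

open Matrix
open scoped ComplexOrder InnerProductSpace

theorem norm_adjoint_apply_lt_self {𝕜 E F : Type*} [RCLike 𝕜] [NormedAddCommGroup E]
    [InnerProductSpace 𝕜 E] [NormedAddCommGroup F] [InnerProductSpace 𝕜 F] {T : E → F}
    {S : F → E} (hTS : ∀ x y, ⟪T x, y⟫_𝕜 = ⟪x, S y⟫_𝕜) (hT : ∀ x ≠ 0, ‖T x‖ < ‖x‖) {y : F}
    (hy : y ≠ 0) : ‖S y‖ < ‖y‖ := by
  by_cases hS : S y = 0
  · simpa [hS] using hy
  have : ‖S y‖ * ‖S y‖ < ‖S y‖ * ‖y‖ :=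
    calc ‖S y‖ * ‖S y‖ = RCLike.re ⟪S y, S y⟫_𝕜 := (inner_self_eq_norm_mul_norm _).symm
      _ = RCLike.re ⟪T (S y), y⟫_𝕜 := by rw [hTS]
      _ ≤ ‖T (S y)‖ * ‖y‖ := (RCLike.re_le_norm _).trans (norm_inner_le_norm _ _)
      _ < ‖S y‖ * ‖y‖ := mul_lt_mul_of_pos_right (hT _ hS) (norm_pos_iff.2 hy)
  exact lt_of_mul_lt_mul_left this (norm_nonneg _)

namespace Matrix

variable {𝕜 m n : Type*} [RCLike 𝕜] [Fintype m] [Fintype n]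

theorem star_dotProduct_self_eq_norm_sq (x : n → 𝕜) :
    star x ⬝ᵥ x = (‖WithLp.toLp 2 x‖ : 𝕜) ^ 2 := by
  rw [← inner_self_eq_norm_sq_to_K, EuclideanSpace.inner_toLp_toLp, dotProduct_comm]

theorem star_dotProduct_one_sub_conjTranspose_mul_self_mulVec [DecidableEq n]
    (A : Matrix m n 𝕜) (x : n → 𝕜) :
    star x ⬝ᵥ ((1 - Aᴴ * A) *ᵥ x) = star x ⬝ᵥ x - star (A *ᵥ x) ⬝ᵥ (A *ᵥ x) := by
  rw [sub_mulVec, one_mulVec, dotProduct_sub, ← mulVec_mulVec, dotProduct_mulVec, ← star_mulVec]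

theorem posDef_one_sub_conjTranspose_mul_self_iff_s13 [DecidableEq n] (A : Matrix m n 𝕜) :
    (1 - Aᴴ * A).PosDef ↔ ∀ x : EuclideanSpace 𝕜 n, x ≠ 0 → ‖toEuclideanLin A x‖ < ‖x‖ := by
  rw [posDef_iff_dotProduct_mulVec,
    and_iff_right (isHermitian_one.sub (isHermitian_conjTranspose_mul_self A))]
  refine (WithLp.equiv 2 (n → 𝕜)).symm.forall_congr fun x ↦ ?_
  simp only [ne_eq, WithLp.equiv_symm_apply, WithLp.toLp_eq_zero, toLpLin_toLp, toLin'_apply]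
  rw [star_dotProduct_one_sub_conjTranspose_mul_self_mulVec, star_dotProduct_self_eq_norm_sq,
    star_dotProduct_self_eq_norm_sq, sub_pos, ← RCLike.ofReal_pow, ← RCLike.ofReal_pow,
    RCLike.ofReal_lt_ofReal, pow_lt_pow_iff_left₀ (norm_nonneg _) (norm_nonneg _) two_ne_zero]

theorem PosDef.one_sub_mul_conjTranspose_self [DecidableEq m] [DecidableEq n]
    {A : Matrix m n 𝕜} (hA : (1 - Aᴴ * A).PosDef) : (1 - A * Aᴴ).PosDef := by
  have hAdj := posDef_one_sub_conjTranspose_mul_self_iff_s13 Aᴴ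
  rw [conjTranspose_conjTranspose] at hAdj
  refine hAdj.2 fun y hy ↦ norm_adjoint_apply_lt_self (𝕜 := 𝕜) (fun x y ↦ ?_)
    ((posDef_one_sub_conjTranspose_mul_self_iff_s13 A).1 hA) hy
  rw [toEuclideanLin_conjTranspose_eq_adjoint, LinearMap.adjoint_inner_right]

end Matrix

section SignatureForm

variable {𝕜 m n : Type*} [RCLike 𝕜] [Fintype m] [Fintype n]

def signatureForm (v v' : (m → 𝕜) × (n → 𝕜)) : 𝕜 :=
  star v.1 ⬝ᵥ v'.1 - star v.2 ⬝ᵥ v'.2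

theorem signatureForm_graph_left (Z : Matrix n m 𝕜) (u : m → 𝕜) (v' : (m → 𝕜) × (n → 𝕜)) :
    signatureForm (u, Z *ᵥ u) v' = star u ⬝ᵥ (v'.1 - Zᴴ *ᵥ v'.2) := by
  rw [signatureForm, star_mulVec, ← dotProduct_mulVec, dotProduct_sub]

theorem signatureForm_graph_self [DecidableEq m] (Z : Matrix n m 𝕜) (u : m → 𝕜) :
    signatureForm (u, Z *ᵥ u) (u, Z *ᵥ u) = star u ⬝ᵥ ((1 - Zᴴ * Z) *ᵥ u) := by
  rw [signatureForm_graph_left, sub_mulVec, one_mulVec, mulVec_mulVec]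

theorem signatureForm_cograph_self [DecidableEq n] (Z : Matrix n m 𝕜) (w : n → 𝕜) :
    signatureForm (Zᴴ *ᵥ w, w) (Zᴴ *ᵥ w, w) = -(star w ⬝ᵥ ((1 - Z * Zᴴ) *ᵥ w)) := by
  have h := star_dotProduct_one_sub_conjTranspose_mul_self_mulVec Zᴴ w
  rw [conjTranspose_conjTranspose] at h
  rw [h, signatureForm, neg_sub]

theorem forall_signatureForm_graph_eq_zero_iff (Z : Matrix n m 𝕜) (v' : (m → 𝕜) × (n → 𝕜)) :
    (∀ u, signatureForm (u, Z *ᵥ u) v' = 0) ↔ v'.1 = Zᴴ *ᵥ v'.2 := by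
  simp only [signatureForm_graph_left]
  refine ⟨fun h ↦ sub_eq_zero.1 (dotProduct_star_self_eq_zero.1 (h _)), fun h u ↦ ?_⟩
  rw [h, sub_self, dotProduct_zero]

end SignatureForm

/-- `h`-orthocomplementation interchanges the positive and negative bounded symmetric
domains: if `1 − Z₁ᴴ Z₁` is positive definite then the graph `W = {(u, Z₁ u)}` is
`h`-positive definite, its `h`-orthocomplement is the graph `{(Z₁ᴴ w, w)}`, and
`1 − Z₁ Z₁ᴴ` is positive definite, so the orthocomplement is `h`-negative definite. -/
theorem stmt_13 (p q : ℕ)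
    (h : ((Fin p → ℂ) × (Fin q → ℂ)) → ((Fin p → ℂ) × (Fin q → ℂ)) → ℂ)
    (hh : ∀ v v', h v v' =
      (∑ i, starRingEnd ℂ (v.1 i) * v'.1 i) - ∑ j, starRingEnd ℂ (v.2 j) * v'.2 j)
    (Z₁ : Matrix (Fin q) (Fin p) ℂ)
    (hZ : (1 - Z₁.conjTranspose * Z₁).PosDef) :
    (∀ v ∈ {v : (Fin p → ℂ) × (Fin q → ℂ) | ∃ u, v = (u, Z₁ *ᵥ u)},
        v ≠ 0 → h v v > 0) ∧
    {v' | ∀ v ∈ {v : (Fin p → ℂ) × (Fin q → ℂ) | ∃ u, v = (u, Z₁ *ᵥ u)}, h v v' = 0} =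
      {v' : (Fin p → ℂ) × (Fin q → ℂ) | ∃ w, v' = (Z₁.conjTranspose *ᵥ w, w)} ∧
    ((1 - Z₁ * Z₁.conjTranspose).PosDef ∧
      ∀ v' ∈ {v' : (Fin p → ℂ) × (Fin q → ℂ) | ∃ w, v' = (Z₁.conjTranspose *ᵥ w, w)},
        v' ≠ 0 → h v' v' < 0) := by
  obtain rfl : h = signatureForm := funext₂ fun v v' ↦ by simp [hh, signatureForm, dotProduct]
  refine ⟨?_, ?_, hZ.one_sub_mul_conjTranspose_self, ?_⟩
  · rintro _ ⟨u, rfl⟩ hv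
    rw [signatureForm_graph_self]
    exact hZ.dotProduct_mulVec_pos (by rintro rfl; simp at hv)
  · ext v'
    simp only [Set.mem_ofPred_eq, forall_exists_index, forall_eq_apply_imp_iff]
    rw [forall_signatureForm_graph_eq_zero_iff]
    exact ⟨fun h ↦ ⟨v'.2, Prod.ext h rfl⟩, by rintro ⟨w, rfl⟩; rfl⟩
  · rintro _ ⟨w, rfl⟩ hv
    rw [signatureForm_cograph_self, neg_lt_zero]
    exact hZ.one_sub_mul_conjTranspose_self.dotProduct_mulVec_pos (by rintro rfl; simp at hv)
end
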